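/- The one-dimensional kernel Φ(τ,y,a,b) satisfies the decay bound Φ(τ,y,a,b) ≤ (4πτ)^{-1/2}·√(θ/sinh θ)·exp{-τ a²·(sinh θ/(θ cosh θ))}, where θ = 2bτ. -/

import Mathlib

/-!
The exponent of `Φ` is a quadratic polynomial in `y` with positive leading coefficient
`θ cosh θ / (4τ sinh θ)`. Completing the square, its minimum value is
`(a²τ/(θ sinh θ cosh θ)) · (cosh θ - 1)(cosh θ + 1)`, and `cosh² θ - 1 = sinh² θ` turns this into
`τ a² sinh θ / (θ cosh θ)`; the bound follows since `exp` is monotone.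
-/

open Real

theorem kernel_exponent_eq_sq_add (a τ θ y : ℝ) (hτ : τ ≠ 0) (hθ : θ ≠ 0) :
    1 / (4 * τ) * (θ * cosh θ / sinh θ * y ^ 2 + 4 * a * τ * ((cosh θ - 1) / sinh θ) * y
        + 8 * a ^ 2 * τ ^ 2 * ((cosh θ - 1) / (θ * sinh θ))) =
      θ * cosh θ / (4 * τ * sinh θ) * (y + 2 * a * τ * (cosh θ - 1) / (θ * cosh θ)) ^ 2
        + τ * a ^ 2 * (sinh θ / (θ * cosh θ)) := by
  have hs : sinh θ ≠ 0 := sinh_ne_zero.mpr hθ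
  have hc : cosh θ ≠ 0 := (cosh_pos θ).ne'
  field_simp
  linear_combination 4 * τ ^ 2 * a ^ 2 * cosh_sq θ

theorem le_kernel_exponent (a τ θ y : ℝ) (hτ : 0 < τ) (hθ : 0 < θ) :
    τ * a ^ 2 * (sinh θ / (θ * cosh θ)) ≤
      1 / (4 * τ) * (θ * cosh θ / sinh θ * y ^ 2 + 4 * a * τ * ((cosh θ - 1) / sinh θ) * y
        + 8 * a ^ 2 * τ ^ 2 * ((cosh θ - 1) / (θ * sinh θ))) := by
  rw [kernel_exponent_eq_sq_add a τ θ y hτ.ne' hθ.ne']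
  have hs : 0 < sinh θ := sinh_pos_iff.mpr hθ
  have hc : 0 < cosh θ := cosh_pos θ
  exact le_add_of_nonneg_left (by positivity)

theorem phi_decay_bound (a b τ y : ℝ) (hb : 0 < b) (hτ : 0 < τ) :
    (1 / Real.sqrt (4 * π * τ)) * Real.sqrt ((2 * b * τ) / Real.sinh (2 * b * τ)) *
        Real.exp (-(1 / (4 * τ)) *
          (((2 * b * τ) * Real.cosh (2 * b * τ) / Real.sinh (2 * b * τ)) * y ^ 2
            + 4 * a * τ * ((Real.cosh (2 * b * τ) - 1) / Real.sinh (2 * b * τ)) * y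
            + 8 * a ^ 2 * τ ^ 2 *
              ((Real.cosh (2 * b * τ) - 1) / ((2 * b * τ) * Real.sinh (2 * b * τ))))) ≤
      (1 / Real.sqrt (4 * π * τ)) * Real.sqrt ((2 * b * τ) / Real.sinh (2 * b * τ)) *
        Real.exp (-τ * a ^ 2 *
          (Real.sinh (2 * b * τ) / ((2 * b * τ) * Real.cosh (2 * b * τ)))) := by
  gcongr _ * exp ?_
  rw [neg_mul, neg_mul, neg_mul, neg_le_neg_iff]
  exact le_kernel_exponent a τ (2 * b * τ) y hτ (by positivity)
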